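/- arXiv:0705.2332 — 10 statements merged into one kernel-verified Lean document; each statement's English description precedes it below -/
import Mathlib

section
/- Let L be a Lie algebra over a field F of characteristic not 2, and let x, y ∈ L be extremal elements, meaning [x,[x,L]] ⊆ F·x and [y,[y,L]] ⊆ F·y, with associated functionals f_x, f_y defined by [x,[x,z]] = f_x(z)·x and [y,[y,z]] = f_y(z)·y. Then f_x(y) = f_y(x). -/
/-- for extremal elements `x`, `y` of a Lie algebra over a field of
characteristic not 2, with extremal functionals `fx`, `fy`, one has `fx y = fy x`. -/
theorem extremal_functional_symm {F L : Type*} [Field F] [LieRing L] [LieAlgebra F L]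
    (h2 : (2 : F) ≠ 0) (x y : L) (hx : x ≠ 0) (hy : y ≠ 0)
    (fx fy : L →ₗ[F] F)
    (hfx : ∀ z : L, ⁅x, ⁅x, z⁆⁆ = fx z • x)
    (hfy : ∀ z : L, ⁅y, ⁅y, z⁆⁆ = fy z • y) :
    fx y = fy x := by
  by_cases hxy : ⁅x, y⁆ = 0
  · have h1 : fx y • x = 0 := by
      rw [← hfx y, hxy, lie_zero]
    have h2' : fy x • y = 0 := by
      have : ⁅y, x⁆ = 0 := by rw [← lie_skew, hxy, neg_zero]
      rw [← hfy x, this, lie_zero]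
    have e1 : fx y = 0 := by
      by_contra h; exact hx (by simpa [smul_eq_zero, h] using h1)
    have e2 : fy x = 0 := by
      by_contra h; exact hy (by simpa [smul_eq_zero, h] using h2')
    rw [e1, e2]
  · -- compute ⁅y, ⁅x, ⁅x, y⁆⁆⁆ two ways
    have hA : ⁅y, ⁅x, ⁅x, y⁆⁆⁆ = -(fx y • ⁅x, y⁆) := by
      rw [hfx y, lie_smul, ← lie_skew, smul_neg]
    have hB : ⁅y, ⁅x, ⁅x, y⁆⁆⁆ = -(fy x • ⁅x, y⁆) := by
      rw [leibniz_lie]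
      have hyx : ⁅y, ⁅x, y⁆⁆ = -(fy x • y) := by
        rw [← lie_skew x y, lie_neg, hfy x]
      rw [hyx]
      have : ⁅⁅y, x⁆, ⁅x, y⁆⁆ = 0 := by
        rw [← lie_skew x y, lie_neg, neg_eq_zero, lie_self]
      rw [this, zero_add, lie_neg, lie_smul]
    have key : (fx y - fy x) • ⁅x, y⁆ = 0 := by
      rw [sub_smul, sub_eq_zero]
      have := hA.symm.trans hB
      exact neg_injective this
    rcases smul_eq_zero.mp key with h | h
    · exact sub_eq_zero.mp h
    · exact absurd h hxy
end

section
/- Let L be a Lie algebra over a field F of characteristic not 2, x an extremal element with extremal functional f_x, and y, z ∈ L. Then 2·[[x,y],[x,z]] = f_x([y,z])·x + f_x(z)·[x,y] − f_x(y)·[x,z]. -/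
/-- first Premet identity: for an extremal element `x` with extremal
functional `fx` and any `y z`,
`2•⁅⁅x,y⁆,⁅x,z⁆⁆ = fx ⁅y,z⁆ • x + fx z • ⁅x,y⁆ − fx y • ⁅x,z⁆`. -/
theorem premet_identity_one {F L : Type*} [Field F] [LieRing L] [LieAlgebra F L]
    (h2 : (2 : F) ≠ 0) (x : L) (hx : x ≠ 0) (fx : L →ₗ[F] F)
    (hfx : ∀ z : L, ⁅x, ⁅x, z⁆⁆ = fx z • x) (y z : L) :
    (2 : F) • ⁅⁅x, y⁆, ⁅x, z⁆⁆ =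
      fx ⁅y, z⁆ • x + fx z • ⁅x, y⁆ - fx y • ⁅x, z⁆ := by
  have hyz : ⁅y, ⁅x, z⁆⁆ = ⁅z, ⁅x, y⁆⁆ + ⁅x, ⁅y, z⁆⁆ := by
    rw [leibniz_lie y x z]
    congr 1
    rw [← lie_skew y x, neg_lie, ← lie_skew z ⁅x, y⁆]
  have hA : ⁅x, ⁅y, ⁅x, z⁆⁆⁆ = ⁅⁅x, y⁆, ⁅x, z⁆⁆ - fx z • ⁅x, y⁆ := by
    rw [leibniz_lie, hfx z, lie_smul, ← lie_skew y x, smul_neg, ← sub_eq_add_neg]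
  have hB : ⁅x, ⁅z, ⁅x, y⁆⁆⁆ = -⁅⁅x, y⁆, ⁅x, z⁆⁆ - fx y • ⁅x, z⁆ := by
    rw [leibniz_lie, hfx y, lie_smul, ← lie_skew z x, smul_neg, ← sub_eq_add_neg,
      ← lie_skew ⁅x, z⁆ ⁅x, y⁆]
  have hC : ⁅x, ⁅y, ⁅x, z⁆⁆⁆ = ⁅x, ⁅z, ⁅x, y⁆⁆⁆ + fx ⁅y, z⁆ • x := by
    rw [hyz, lie_add, hfx]
  have key : ⁅⁅x, y⁆, ⁅x, z⁆⁆ + ⁅⁅x, y⁆, ⁅x, z⁆⁆ =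
      fx ⁅y, z⁆ • x + fx z • ⁅x, y⁆ - fx y • ⁅x, z⁆ := by
    have h := hA.symm.trans hC
    rw [hB] at h
    have h' := congrArg (· + (⁅⁅x, y⁆, ⁅x, z⁆⁆ + fx z • ⁅x, y⁆)) h
    abel_nf at h' ⊢
    linear_combination (norm := abel) h'
  rw [two_smul, key]
end

section
/- Let L be a Lie algebra over a field F of characteristic not 2, x an extremal element with extremal functional f_x, and y, z ∈ L. Then 2·[x,[y,[x,z]]] = f_x([y,z])·x − f_x(z)·[x,y] − f_x(y)·[x,z]. -/
/-- second Premet identity: for an extremal element `x` with extremal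
functional `fx` and any `y z`,
`2•⁅x,⁅y,⁅x,z⁆⁆⁆ = fx ⁅y,z⁆ • x − fx z • ⁅x,y⁆ − fx y • ⁅x,z⁆`. -/
theorem premet_identity_two {F L : Type*} [Field F] [LieRing L] [LieAlgebra F L]
    (h2 : (2 : F) ≠ 0) (x : L) (hx : x ≠ 0) (fx : L →ₗ[F] F)
    (hfx : ∀ z : L, ⁅x, ⁅x, z⁆⁆ = fx z • x) (y z : L) :
    (2 : F) • ⁅x, ⁅y, ⁅x, z⁆⁆⁆ =
      fx ⁅y, z⁆ • x - fx z • ⁅x, y⁆ - fx y • ⁅x, z⁆ := by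
  have h1 : ⁅x, ⁅y, z⁆⁆ = ⁅⁅x, y⁆, z⁆ + ⁅y, ⁅x, z⁆⁆ := leibniz_lie x y z
  have h2' : ⁅x, ⁅⁅x, y⁆, z⁆⁆ = ⁅⁅x, ⁅x, y⁆⁆, z⁆ + ⁅⁅x, y⁆, ⁅x, z⁆⁆ :=
    leibniz_lie x ⁅x, y⁆ z
  have h3 : ⁅⁅x, y⁆, ⁅x, z⁆⁆ = ⁅x, ⁅y, ⁅x, z⁆⁆⁆ - ⁅y, ⁅x, ⁅x, z⁆⁆⁆ := by
    rw [lie_lie]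
  have key : fx ⁅y, z⁆ • x =
      fx y • ⁅x, z⁆ + ((2 : F) • ⁅x, ⁅y, ⁅x, z⁆⁆⁆ + fx z • ⁅x, y⁆) := by
    rw [← hfx, h1, lie_add, h2', h3, hfx, hfx, smul_lie, lie_smul, two_smul, ← lie_skew x y, smul_neg]
    abel
  rw [key]; abel
end

section
/- Let x⊗h and y⊗k be infinitesimal transvections on a finite-dimensional vector space V over a field F of characteristic not 2, with F·x ≠ F·y and ker h ≠ ker k. If h(y) = 0 and k(x) ≠ 0, then the Lie subalgebra of gl(V) generated by x⊗h and y⊗k is isomorphic to the three-dimensional Heisenberg Lie algebra. -/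
/-!
With `A = x ⊗ h` and `B = y ⊗ k`, the rule
`⁅x ⊗ h, y ⊗ k⁆ = h(y) • (x ⊗ k) - k(x) • (y ⊗ h)` and `h(y) = 0` give
`⁅A, B⁆ = -k(x) • (y ⊗ h)`, which commutes with `A` and `B` as `h(x) = h(y) = k(y) = 0`.
Hence `span {A, B, ⁅A, B⁆}` is already closed under the bracket, so it is the Lie algebra
generated by `A` and `B`, with `⁅A, B⁆` central. Evaluating a vanishing combination of `A`, `B`,
`⁅A, B⁆` at `x` and at a vector outside `ker h` shows, since `x` and `y` are independent, that
the three are linearly independent.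
-/

attribute [local instance 100] LieRing.ofAssociativeRing

namespace LieSubalgebra

variable {R L : Type*} [CommRing R] [LieRing L] [LieAlgebra R L]

theorem lie_eq_zero_of_mem_lieSpan {s : Set L} {c w : L} (hc : ∀ u ∈ s, ⁅c, u⁆ = 0)
    (hw : w ∈ lieSpan R L s) : ⁅c, w⁆ = 0 := by
  induction hw using lieSpan_induction with
  | mem u hu => exact hc u hu
  | zero => exact lie_zero c
  | add u v _ _ hu hv => rw [lie_add, hu, hv, add_zero]
  | smul t u _ hu => rw [lie_smul, hu, smul_zero]
  | lie u v _ _ hu hv => rw [leibniz_lie, hu, hv, zero_lie, lie_zero, add_zero]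

open Submodule in
theorem coe_lieSpan_pair_eq_span {a b : L} (ha : ⁅⁅a, b⁆, a⁆ = 0)
    (hb : ⁅⁅a, b⁆, b⁆ = 0) :
    (lieSpan R L {a, b} : Submodule R L) = span R {a, b, ⁅a, b⁆} := by
  have lie_mem : ∀ {x y}, x ∈ span R {a, b, ⁅a, b⁆} → y ∈ span R {a, b, ⁅a, b⁆} →
      ⁅x, y⁆ ∈ span R {a, b, ⁅a, b⁆} := by
    intro x y hx hy
    induction hx, hy using span_induction₂ with
    | mem_mem u v hu hv =>
      have hc : ⁅a, b⁆ ∈ span R {a, b, ⁅a, b⁆} := subset_span (by simp)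
      have ha' : ⁅a, ⁅a, b⁆⁆ = 0 := by rw [← lie_skew, ha, neg_zero]
      have hb' : ⁅b, ⁅a, b⁆⁆ = 0 := by rw [← lie_skew, hb, neg_zero]
      have hba : ⁅b, a⁆ = -⁅a, b⁆ := (lie_skew b a).symm
      revert v hv
      revert u hu
      simp only [Set.mem_insert_iff, Set.mem_singleton_iff, forall_eq_or_imp, forall_eq,
        lie_self, ha, hb, ha', hb', hba, neg_mem_iff, hc, zero_mem, and_self]
    | zero_left y hy => simp
    | zero_right x hx => simp
    | add_left x y z _ _ _ hx hy => simp [add_mem hx hy]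
    | add_right x y z _ _ _ hx hy => simp [add_mem hx hy]
    | smul_left r x y _ _ h => simp [smul_mem _ r h]
    | smul_right r x y _ _ h => simp [smul_mem _ r h]
  obtain ⟨K, hK⟩ :=
    (span R {a, b, ⁅a, b⁆}).exists_lieSubalgebra_coe_eq_iff.mpr fun _ _ ↦ lie_mem
  have ha : a ∈ lieSpan R L {a, b} := subset_lieSpan (by simp)
  have hb : b ∈ lieSpan R L {a, b} := subset_lieSpan (by simp)
  refine le_antisymm ?_
    (span_le.mpr (Set.insert_subset ha (Set.pair_subset hb (lie_mem' _ ha hb))))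
  rw [← hK, toSubmodule_le_toSubmodule, lieSpan_le, ← coe_toSubmodule, hK]
  exact Set.pair_subset (subset_span (by simp)) (subset_span (by simp))

theorem exists_basis_lieSpan_pair {a b : L} (hli : LinearIndependent R ![a, b, ⁅a, b⁆])
    (ha : ⁅⁅a, b⁆, a⁆ = 0) (hb : ⁅⁅a, b⁆, b⁆ = 0) :
    ∃ e : Module.Basis (Fin 3) R (lieSpan R L {a, b}),
      ⁅e 0, e 1⁆ = e 2 ∧ ∀ w : lieSpan R L {a, b}, ⁅e 2, w⁆ = 0 := by
  have hspan : Submodule.span R (Set.range ![a, b, ⁅a, b⁆]) = lieSpan R L {a, b} := by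
    rw [coe_lieSpan_pair_eq_span ha hb, Matrix.range_cons, Matrix.range_cons, Matrix.range_cons,
      Matrix.range_empty, Set.union_empty, Set.singleton_union, Set.singleton_union]
  let e := (Module.Basis.span hli).map (LinearEquiv.ofEq _ _ hspan)
  have he (i : Fin 3) : (e i : L) = ![a, b, ⁅a, b⁆] i := by
    simp [e, Module.Basis.span_apply]
  refine ⟨e, Subtype.ext ?_, fun w ↦ Subtype.ext ?_⟩
  · simp only [coe_bracket, he]
    rfl
  · rw [coe_bracket, he]
    exact lie_eq_zero_of_mem_lieSpan (by rintro u (rfl | rfl) <;> assumption) w.2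

end LieSubalgebra

theorem LinearIndependent.pair_of_span_singleton_ne {K V : Type*} [Field K] [AddCommGroup V]
    [Module K V] {x y : V} (hx : x ≠ 0) (hy : y ≠ 0)
    (hxy : Submodule.span K {x} ≠ Submodule.span K {y}) : LinearIndependent K ![x, y] := by
  rw [LinearIndependent.pair_iff' hx]
  rintro a rfl
  have ha : IsUnit a := isUnit_iff_ne_zero.mpr (left_ne_zero_of_smul hy)
  exact hxy (Submodule.span_singleton_smul_eq ha x).symm

namespace LinearMap

theorem lie_smulRight_smulRight {R M : Type*} [CommRing R] [AddCommGroup M] [Module R M]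
    (f g : M →ₗ[R] R) (x y : M) :
    ⁅(f.smulRight x : Module.End R M), g.smulRight y⁆ =
      f y • g.smulRight x - g x • f.smulRight y := by
  ext v
  simp only [LieRing.of_associative_ring_bracket, sub_apply, Module.End.mul_apply, smul_apply,
    smulRight_apply, map_smul, smul_smul]
  rw [mul_comm (g v), mul_comm (f v)]

theorem linearIndependent_smulRight_lie {K V : Type*} [Field K] [AddCommGroup V] [Module K V]
    {x y : V} {f g : Module.Dual K V} (hxy : LinearIndependent K ![x, y]) (hf : f ≠ 0)
    (hfx : f x = 0) (hfy : f y = 0) (hgx : g x ≠ 0) :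
    LinearIndependent K ![(f.smulRight x : Module.End K V), g.smulRight y,
      ⁅(f.smulRight x : Module.End K V), g.smulRight y⁆] := by
  rw [lie_smulRight_smulRight, hfy, zero_smul, zero_sub, Fintype.linearIndependent_iff]
  intro c hc
  have hc_apply (v : V) : (c 0 * f v) • x + (c 1 * g v - c 2 * g x * f v) • y = 0 := by
    have := congr($hc v)
    simp only [Fin.sum_univ_three, Matrix.cons_val_zero, Matrix.cons_val_one, Matrix.cons_val,
      smul_neg, add_apply, smul_apply, coe_smulRight, neg_apply, zero_apply] at this
    linear_combination (norm := module) this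
  have hc1 : c 1 = 0 := by
    have := LinearIndependent.pair_iff.mp hxy _ _ (hc_apply x)
    simpa [hfx, hgx] using this.2
  obtain ⟨v, hv⟩ : ∃ v, f v ≠ 0 := DFunLike.ne_iff.mp hf
  obtain ⟨h0, h2⟩ := LinearIndependent.pair_iff.mp hxy _ _ (hc_apply v)
  have hc0 : c 0 = 0 := by simpa [hv] using h0
  have hc2 : c 2 = 0 := by simpa [hc1, hv, hgx] using h2
  intro i
  fin_cases i <;> assumption

end LinearMap

theorem extraspecial_pair_heisenberg_general {F V : Type*} [Field F]
    [AddCommGroup V] [Module F V]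
    (x y : V) (h k : Module.Dual F V)
    (hy : y ≠ 0) (hh : h ≠ 0)
    (hhx : h x = 0) (hky : k y = 0)
    (hcentres : (Submodule.span F {x} : Submodule F V) ≠ Submodule.span F {y})
    (hhy : h y = 0) (hkx : k x ≠ 0) :
    ∃ b : Module.Basis (Fin 3) F
        (LieSubalgebra.lieSpan F (Module.End F V) {h.smulRight x, k.smulRight y}),
      ⁅b 0, b 1⁆ = b 2 ∧
      ∀ w : LieSubalgebra.lieSpan F (Module.End F V) {h.smulRight x, k.smulRight y},
        ⁅b 2, w⁆ = 0 := by
  have hx : x ≠ 0 := fun hx ↦ hkx (by rw [hx, map_zero])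
  have hxy := LinearIndependent.pair_of_span_singleton_ne hx hy hcentres
  have hAB : ⁅(h.smulRight x : Module.End F V), k.smulRight y⁆ = -k x • h.smulRight y := by
    rw [LinearMap.lie_smulRight_smulRight, hhy, zero_smul, zero_sub, neg_smul]
  refine LieSubalgebra.exists_basis_lieSpan_pair
    (LinearMap.linearIndependent_smulRight_lie hxy hh hhx hhy hkx) ?_ ?_
  · rw [hAB, smul_lie, LinearMap.lie_smulRight_smulRight, hhx, hhy, zero_smul, zero_smul,
      sub_zero, smul_zero]
  · rw [hAB, smul_lie, LinearMap.lie_smulRight_smulRight, hhy, hky, zero_smul, zero_smul,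
      sub_zero, smul_zero]

/-- two infinitesimal transvections `x⊗h`, `y⊗k` with distinct centres
and distinct axes, `h y = 0` and `k x ≠ 0`, generate a Lie algebra isomorphic to the
3-dimensional Heisenberg Lie algebra. -/
theorem extraspecial_pair_heisenberg {F V : Type*} [Field F]
    [AddCommGroup V] [Module F V] [FiniteDimensional F V]
    (h2 : (2 : F) ≠ 0) (x y : V) (h k : Module.Dual F V)
    (hx : x ≠ 0) (hy : y ≠ 0) (hh : h ≠ 0) (hk : k ≠ 0)
    (hhx : h x = 0) (hky : k y = 0)
    (hcentres : (Submodule.span F {x} : Submodule F V) ≠ Submodule.span F {y})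
    (haxes : LinearMap.ker h ≠ LinearMap.ker k)
    (hhy : h y = 0) (hkx : k x ≠ 0) :
    ∃ b : Module.Basis (Fin 3) F
        (LieSubalgebra.lieSpan F (Module.End F V) {h.smulRight x, k.smulRight y}),
      ⁅b 0, b 1⁆ = b 2 ∧
      ∀ w : LieSubalgebra.lieSpan F (Module.End F V) {h.smulRight x, k.smulRight y},
        ⁅b 2, w⁆ = 0 :=
  extraspecial_pair_heisenberg_general x y h k hy hh hhx hky hcentres hhy hkx
end

section
/- Let x⊗h and y⊗k be infinitesimal transvections on a finite-dimensional vector space V over a field F of characteristic not 2, with F·x ≠ F·y and ker h ≠ ker k. If h(y) ≠ 0 and k(x) ≠ 0, then the Lie subalgebra of gl(V) generated by x⊗h and y⊗k is isomorphic to sl₂(F). -/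
/-!
Rescale `k` so that `h y * k x = 1`. Then `e = x ⊗ h` and `f = y ⊗ k` satisfy
`⁅⁅e, f⁆, e⁆ = 2 e` and `⁅⁅e, f⁆, f⁆ = -2 f`, i.e. `(⁅e, f⁆, e, f)` is an `sl₂`-triple. Sending
`diag(1, -1), E₁₂, E₂₁` to it is a Lie algebra morphism from `sl₂` onto the Lie algebra generated
by `e` and `f`. It is injective when `2 ≠ 0`: `(ad e)²` maps `a ⁅e, f⁆ + b e + c f` to `-2 c e`,
and symmetrically `(ad f)²` detects `b`.
-/

attribute [local instance 100] LieRing.ofAssociativeRing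

open LieAlgebra.SpecialLinear

lemma LieAlgebra.SpecialLinear.sl_fin_two_val_one_one {R : Type*} [CommRing R]
    (A : sl (Fin 2) R) : A.val 1 1 = -A.val 0 0 := by
  have htr : Matrix.trace A.val = 0 := A.2
  rw [Matrix.trace_fin_two] at htr
  linear_combination htr

namespace IsSl2Triple

section CommRing

variable {R L : Type*} [CommRing R] [LieRing L] [LieAlgebra R L] {h e f : L}

def toSl2Hom (t : IsSl2Triple h e f) : sl (Fin 2) R →ₗ⁅R⁆ L where
  toFun A := A.val 0 0 • h + A.val 0 1 • e + A.val 1 0 • f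
  map_add' A B := by
    simp only [AddMemClass.coe_add, Matrix.add_apply, add_smul]
    abel
  map_smul' c A := by
    simp only [SetLike.val_smul, Matrix.smul_apply, smul_eq_mul, mul_smul, smul_add,
      RingHom.id_apply]
  map_lie' {A B} := by
    have hEH : ⁅e, h⁆ = (-2 : R) • e := by rw [← lie_skew, t.lie_h_e_smul R]; module
    have hFH : ⁅f, h⁆ = (2 : R) • f := by rw [← lie_skew, t.lie_lie_smul_f R]; module
    have hFE : ⁅f, e⁆ = -h := by rw [← lie_skew, t.lie_e_f]
    simp only [sl_bracket, Matrix.sub_apply, Matrix.mul_apply, Fin.sum_univ_two,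
      sl_fin_two_val_one_one A, sl_fin_two_val_one_one B, lie_add, add_lie, lie_smul, smul_lie,
      t.lie_h_e_smul R, t.lie_lie_smul_f R, t.lie_e_f, hEH, hFH, hFE, lie_self]
    match_scalars <;> ring

lemma toSl2Hom_apply (t : IsSl2Triple h e f) (A : sl (Fin 2) R) :
    t.toSl2Hom A = A.val 0 0 • h + A.val 0 1 • e + A.val 1 0 • f :=
  rfl

lemma range_toSl2Hom (t : IsSl2Triple h e f) :
    (t.toSl2Hom (R := R)).range = LieSubalgebra.lieSpan R L {e, f} := by
  set K := LieSubalgebra.lieSpan R L {e, f}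
  have he : e ∈ K := LieSubalgebra.subset_lieSpan (by simp)
  have hf : f ∈ K := LieSubalgebra.subset_lieSpan (by simp)
  have hh : h ∈ K := t.lie_e_f ▸ K.lie_mem he hf
  apply le_antisymm
  · rintro _ ⟨A, rfl⟩
    exact add_mem (add_mem (K.smul_mem _ hh) (K.smul_mem _ he)) (K.smul_mem _ hf)
  · rw [LieSubalgebra.lieSpan_le]
    rintro _ (rfl | rfl)
    · exact ⟨single 0 1 (by decide) 1, by simp [toSl2Hom_apply]⟩
    · exact ⟨single 1 0 (by decide) 1, by simp [toSl2Hom_apply]⟩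

lemma lie_e_lie_e_lincomb (t : IsSl2Triple h e f) (a b c : R) :
    ⁅e, ⁅e, a • h + b • e + c • f⁆⁆ = (-2 * c) • e := by
  have hEH : ⁅e, h⁆ = (-2 : R) • e := by rw [← lie_skew, t.lie_h_e_smul R]; module
  simp only [lie_add, lie_smul, lie_self, lie_zero, t.lie_e_f, hEH]
  module

end CommRing

variable {F L : Type*} [Field F] [LieRing L] [LieAlgebra F L] {h e f : L}

lemma eq_zero_of_lincomb_eq_zero (t : IsSl2Triple h e f) (h2 : (2 : F) ≠ 0) {a b c : F}
    (habc : a • h + b • e + c • f = 0) : a = 0 ∧ b = 0 ∧ c = 0 := by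
  have hc : c = 0 := by
    have := t.lie_e_lie_e_lincomb a b c
    rw [habc, lie_zero, lie_zero, eq_comm, smul_eq_zero] at this
    simpa [h2, t.e_ne_zero] using this
  have hb : b = 0 := by
    have := t.symm.lie_e_lie_e_lincomb (-a) c b
    rw [show (-a) • -h + c • f + b • e = a • h + b • e + c • f by module, habc, lie_zero,
      lie_zero, eq_comm, smul_eq_zero] at this
    simpa [h2, t.f_ne_zero] using this
  subst hb hc
  simpa [t.h_ne_zero] using habc

lemma toSl2Hom_injective (t : IsSl2Triple h e f) (h2 : (2 : F) ≠ 0) :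
    Function.Injective (t.toSl2Hom (R := F)) := by
  rw [← LieHom.coe_toLinearMap, ← LinearMap.ker_eq_bot, LinearMap.ker_eq_bot']
  intro A hA
  obtain ⟨h00, h01, h10⟩ := t.eq_zero_of_lincomb_eq_zero h2 hA
  ext i j
  fin_cases i <;> fin_cases j <;> simp [h00, h01, h10, sl_fin_two_val_one_one]

theorem nonempty_lieSpan_equiv_sl (t : IsSl2Triple h e f) (h2 : (2 : F) ≠ 0) :
    Nonempty (LieSubalgebra.lieSpan F L {e, f} ≃ₗ⁅F⁆ sl (Fin 2) F) :=
  ⟨(LieEquiv.ofEq _ _ (by rw [t.range_toSl2Hom])).trans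
    (LieEquiv.ofInjective _ (t.toSl2Hom_injective h2)).symm⟩

end IsSl2Triple

lemma LieSubalgebra.lieSpan_pair_smul_right {K L : Type*} [Field K] [LieRing L] [LieAlgebra K L]
    (a b : L) {c : K} (hc : c ≠ 0) :
    lieSpan K L {a, c • b} = lieSpan K L {a, b} := by
  have key : ∀ (d : K) (u v : L), lieSpan K L {u, d • v} ≤ lieSpan K L {u, v} := by
    intro d u v
    rw [lieSpan_le, Set.insert_subset_iff, Set.singleton_subset_iff]
    exact ⟨subset_lieSpan (by simp), LieSubalgebra.smul_mem _ d (subset_lieSpan (by simp))⟩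
  refine le_antisymm (key c a b) ?_
  simpa [smul_smul, inv_mul_cancel₀ hc] using key c⁻¹ a (c • b)

namespace Module.Dual

variable {R M : Type*} [CommRing R] [AddCommGroup M] [Module R M]

lemma smulRight_mul_smulRight (h k : Dual R M) (x y : M) :
    h.smulRight x * k.smulRight y = h y • k.smulRight x := by
  ext v
  simp [smul_smul, mul_comm]

lemma lie_smulRight_smulRight (h k : Dual R M) (x y : M) :
    ⁅h.smulRight x, k.smulRight y⁆ = h y • k.smulRight x - k x • h.smulRight y := by
  rw [LieRing.of_associative_ring_bracket, smulRight_mul_smulRight, smulRight_mul_smulRight]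

theorem isSl2Triple_smulRight [Nontrivial R] {h k : Dual R M} {x y : M}
    (hhx : h x = 0) (hky : k y = 0) (hhyk : h y * k x = 1) :
    IsSl2Triple ⁅h.smulRight x, k.smulRight y⁆ (h.smulRight x) (k.smulRight y) where
  h_ne_zero := by
    have hx : x ≠ 0 := by rintro rfl; simp at hhyk
    intro h0
    have := LinearMap.congr_fun h0 x
    simp only [lie_smulRight_smulRight, LinearMap.sub_apply, LinearMap.smul_apply,
      LinearMap.smulRight_apply, hhx, zero_smul, smul_zero, sub_zero, smul_smul, hhyk, one_smul,
      LinearMap.zero_apply] at this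
    exact hx this
  lie_e_f := rfl
  lie_h_e_nsmul := by
    rw [lie_smulRight_smulRight, LieRing.of_associative_ring_bracket]
    simp only [sub_mul, mul_sub, smul_mul_assoc, mul_smul_comm, smulRight_mul_smulRight, hhx]
    linear_combination (norm := module) (2 * hhyk) • h.smulRight x
  lie_h_f_nsmul := by
    rw [lie_smulRight_smulRight, LieRing.of_associative_ring_bracket]
    simp only [sub_mul, mul_sub, smul_mul_assoc, mul_smul_comm, smulRight_mul_smulRight, hky]
    linear_combination (norm := module) (-2 * hhyk) • k.smulRight y

end Module.Dual

theorem transvection_pair_sl2_general {F V : Type*} [Field F]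
    [AddCommGroup V] [Module F V]
    (h2 : (2 : F) ≠ 0) (x y : V) (h k : Module.Dual F V)
    (hhx : h x = 0) (hky : k y = 0)
    (hhy : h y ≠ 0) (hkx : k x ≠ 0) :
    Nonempty
      ((LieSubalgebra.lieSpan F (Module.End F V) {h.smulRight x, k.smulRight y}) ≃ₗ⁅F⁆
        LieAlgebra.SpecialLinear.sl (Fin 2) F) := by
  set c := (h y * k x)⁻¹
  have hc : c ≠ 0 := inv_ne_zero (mul_ne_zero hhy hkx)
  have t := Module.Dual.isSl2Triple_smulRight (k := c • k) (y := y) hhx (by simp [hky])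
    (by simp only [LinearMap.smul_apply, smul_eq_mul, c]; field_simp)
  have hsmul : (c • k).smulRight y = c • k.smulRight y := by ext; simp [mul_smul]
  rw [← LieSubalgebra.lieSpan_pair_smul_right _ _ hc, ← hsmul]
  exact t.nonempty_lieSpan_equiv_sl h2

/-- two infinitesimal transvections `x⊗h`, `y⊗k` with distinct centres
and distinct axes, `h y ≠ 0` and `k x ≠ 0`, generate a Lie algebra isomorphic to
`sl₂(F)`. -/
theorem transvection_pair_sl2 {F V : Type*} [Field F]
    [AddCommGroup V] [Module F V] [FiniteDimensional F V]
    (h2 : (2 : F) ≠ 0) (x y : V) (h k : Module.Dual F V)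
    (hx : x ≠ 0) (hy : y ≠ 0) (hh : h ≠ 0) (hk : k ≠ 0)
    (hhx : h x = 0) (hky : k y = 0)
    (hcentres : (Submodule.span F {x} : Submodule F V) ≠ Submodule.span F {y})
    (haxes : LinearMap.ker h ≠ LinearMap.ker k)
    (hhy : h y ≠ 0) (hkx : k x ≠ 0) :
    Nonempty
      ((LieSubalgebra.lieSpan F (Module.End F V) {h.smulRight x, k.smulRight y}) ≃ₗ⁅F⁆
        LieAlgebra.SpecialLinear.sl (Fin 2) F) :=
  transvection_pair_sl2_general h2 x y h k hhx hky hhy hkx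
end

section
/- Let x⊗h and y⊗k be infinitesimal transvections with F·x = F·y and ker h ≠ ker k (or F·x ≠ F·y and ker h = ker k). Then the Lie subalgebra of gl(V) generated by x⊗h and y⊗k is two-dimensional. -/
/-!
In both configurations `h y = 0` and `k x = 0`, and `⁅x⊗h, y⊗k⁆ = h(y)·x⊗k − k(x)·y⊗h`, so the
two transvections commute and the Lie algebra they generate is their linear span. They are linearly
independent because in either configuration one of the pairs `(x, y)`, `(h, k)` is linearly
independent and the other consists of nonzero elements.
-/

attribute [local instance 100] LieRing.ofAssociativeRing

open Submodule

section Field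

variable {K M N : Type*} [Field K] [AddCommGroup M] [Module K M] [AddCommGroup N] [Module K N]

theorem LinearMap.linearIndependent_pair_of_ker_ne {f g : M →ₗ[K] N} (hf : f ≠ 0) (hg : g ≠ 0)
    (hfg : LinearMap.ker f ≠ LinearMap.ker g) : LinearIndependent K ![f, g] := by
  refine (LinearIndependent.pair_iff' hf).2 fun a hag => hfg ?_
  have ha : a ≠ 0 := by rintro rfl; exact hg (by simpa using hag.symm)
  rw [← hag, LinearMap.ker_smul f a ha]

theorem linearIndependent_pair_of_span_singleton_ne {x y : M} (hx : x ≠ 0) (hy : y ≠ 0)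
    (hxy : K ∙ x ≠ K ∙ y) : LinearIndependent K ![x, y] := by
  refine (LinearIndependent.pair_iff' hx).2 fun a hay => hxy ?_
  have ha : a ≠ 0 := by rintro rfl; exact hy (by simpa using hay.symm)
  rw [← hay, span_singleton_smul_eq (IsUnit.mk0 a ha)]

theorem LinearMap.smulRight_mul_smulRight (h k : Module.Dual K M) (x y : M) :
    h.smulRight x * k.smulRight y = h y • k.smulRight x := by
  ext v
  simp [smul_comm (h y)]

theorem LinearMap.lie_smulRight_smulRight_s9 (h k : Module.Dual K M) (x y : M) :
    ⁅h.smulRight x, k.smulRight y⁆ = h y • k.smulRight x - k x • h.smulRight y := by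
  rw [Ring.lie_def, smulRight_mul_smulRight, smulRight_mul_smulRight]

theorem LinearIndependent.smulRight_pair {h k : Module.Dual K M} {x y : M}
    (hxy : LinearIndependent K ![x, y]) (hh : h ≠ 0) (hk : k ≠ 0) :
    LinearIndependent K ![h.smulRight x, k.smulRight y] := by
  refine LinearIndependent.pair_iff.2 fun a b hab => ?_
  have hv : ∀ v, a * h v = 0 ∧ b * k v = 0 := fun v =>
    LinearIndependent.pair_iff.1 hxy _ _ (by simpa [mul_smul] using LinearMap.congr_fun hab v)
  have hah : a • h = 0 := LinearMap.ext fun v => (hv v).1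
  have hbk : b • k = 0 := LinearMap.ext fun v => (hv v).2
  exact ⟨(smul_eq_zero.1 hah).resolve_right hh, (smul_eq_zero.1 hbk).resolve_right hk⟩

theorem LinearIndependent.smulRight_pair_of_span_singleton_eq {h k : Module.Dual K M} {x y : M}
    (hhk : LinearIndependent K ![h, k]) (hxy : K ∙ x = K ∙ y) (hy : y ≠ 0) :
    LinearIndependent K ![h.smulRight x, k.smulRight y] := by
  obtain ⟨u, rfl⟩ := span_singleton_eq_span_singleton.1 hxy
  have hx : x ≠ 0 := by rintro rfl; simp at hy
  refine LinearIndependent.pair_iff.2 fun a b hab => ?_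
  have hfun : a • h + (b * u) • k = 0 := LinearMap.ext fun v => by
    simp only [LinearMap.add_apply, LinearMap.smul_apply, LinearMap.zero_apply, smul_eq_mul]
    have := LinearMap.congr_fun hab v
    simp only [LinearMap.add_apply, LinearMap.smul_apply, LinearMap.smulRight_apply,
      LinearMap.zero_apply, Units.smul_def, smul_smul, ← add_smul] at this
    linear_combination (smul_eq_zero.1 this).resolve_right hx
  obtain ⟨ha, hbu⟩ := LinearIndependent.pair_iff.1 hhk _ _ hfun
  exact ⟨ha, (mul_eq_zero.1 hbu).resolve_right u.ne_zero⟩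

end Field

theorem LieSubalgebra.finrank_lieSpan_pair {K L : Type*} [Field K] [LieRing L] [LieAlgebra K L]
    {a b : L} (hab : ⁅a, b⁆ = 0) (hli : LinearIndependent K ![a, b]) :
    Module.finrank K (lieSpan K L {a, b}) = 2 := by
  have hspan : (lieSpan K L {a, b}).toSubmodule = span K {a, b} :=
    coe_lieSpan_eq_span_of_forall_lie_eq_zero <| by
      simp [hab, ← lie_skew b a]
  change Module.finrank K (lieSpan K L {a, b}).toSubmodule = 2
  rw [hspan, ← Matrix.range_cons_cons_empty a b ![], finrank_span_eq_card hli, Fintype.card_fin]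

theorem transvection_pair_two_dimensional_general {F V : Type*} [Field F]
    [AddCommGroup V] [Module F V] (x y : V) (h k : Module.Dual F V)
    (hx : x ≠ 0) (hy : y ≠ 0) (hh : h ≠ 0) (hk : k ≠ 0)
    (hhx : h x = 0) (hky : k y = 0)
    (hconf : ((Submodule.span F {x} : Submodule F V) = Submodule.span F {y} ∧
        LinearMap.ker h ≠ LinearMap.ker k) ∨
      ((Submodule.span F {x} : Submodule F V) ≠ Submodule.span F {y} ∧
        LinearMap.ker h = LinearMap.ker k)) :
    Module.finrank F
      (LieSubalgebra.lieSpan F (Module.End F V) {h.smulRight x, k.smulRight y}) = 2 := by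
  have hyx : h y = 0 ∧ k x = 0 := by
    rcases hconf with ⟨hxy, -⟩ | ⟨-, hhk⟩
    · have hxh : F ∙ x ≤ LinearMap.ker h := (span_singleton_le_iff_mem _ _).2 hhx
      have hyk : F ∙ y ≤ LinearMap.ker k := (span_singleton_le_iff_mem _ _).2 hky
      rw [hxy, span_singleton_le_iff_mem] at hxh
      rw [← hxy, span_singleton_le_iff_mem] at hyk
      exact ⟨hxh, hyk⟩
    · exact ⟨(hhk ▸ hky : y ∈ LinearMap.ker h), (hhk ▸ hhx : x ∈ LinearMap.ker k)⟩
  have hcomm : ⁅h.smulRight x, k.smulRight y⁆ = 0 := by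
    simp [LinearMap.lie_smulRight_smulRight_s9, hyx.1, hyx.2]
  refine LieSubalgebra.finrank_lieSpan_pair hcomm ?_
  rcases hconf with ⟨hxy, hhk⟩ | ⟨hxy, -⟩
  · exact (LinearMap.linearIndependent_pair_of_ker_ne hh hk hhk).smulRight_pair_of_span_singleton_eq
      hxy hy
  · exact (linearIndependent_pair_of_span_singleton_ne hx hy hxy).smulRight_pair hh hk

/-- two infinitesimal transvections with equal centres and distinct axes
(or distinct centres and equal axes) generate a two-dimensional Lie algebra. -/
theorem transvection_pair_two_dimensional {F V : Type*} [Field F]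
    [AddCommGroup V] [Module F V] [FiniteDimensional F V]
    (h2 : (2 : F) ≠ 0) (x y : V) (h k : Module.Dual F V)
    (hx : x ≠ 0) (hy : y ≠ 0) (hh : h ≠ 0) (hk : k ≠ 0)
    (hhx : h x = 0) (hky : k y = 0)
    (hconf : ((Submodule.span F {x} : Submodule F V) = Submodule.span F {y} ∧
        LinearMap.ker h ≠ LinearMap.ker k) ∨
      ((Submodule.span F {x} : Submodule F V) ≠ Submodule.span F {y} ∧
        LinearMap.ker h = LinearMap.ker k)) :
    Module.finrank F
      (LieSubalgebra.lieSpan F (Module.End F V) {h.smulRight x, k.smulRight y}) = 2 :=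
  transvection_pair_two_dimensional_general x y h k hx hy hh hk hhx hky hconf
end

section
/- Let V be a finite-dimensional symplectic vector space over a field F of characteristic not 2 with symplectic form B. For nonzero y ∈ V, the map u(y) : v ↦ B(y,v)·y is an extremal element of sp(V,B): for every A ∈ sp(V,B), [u(y),[u(y),A]] is a scalar multiple of u(y). -/
/-- for nonzero `y`, the map `u(y) : v ↦ B(y,v)·y` is an extremal
element of `sp(V,B)`. -/
theorem symplectic_transvection_extremal {F V : Type*} [Field F]
    [AddCommGroup V] [Module F V] [FiniteDimensional F V]
    (h2 : (2 : F) ≠ 0) (B : LinearMap.BilinForm F V)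
    (hBalt : ∀ v : V, B v v = 0) (hBnd : B.Nondegenerate)
    (y : V) (hy : y ≠ 0)
    (A : Module.End F V) (hA : ∀ v w : V, B (A v) w + B v (A w) = 0) :
    ∃ c : F, ⁅(B y).smulRight y, ⁅(B y).smulRight y, A⁆⁆ = c • (B y).smulRight y := by
  refine ⟨(-2) * (B y (A y)), ?_⟩
  ext v
  simp only [Ring.lie_def, LinearMap.sub_apply, Module.End.mul_apply, LinearMap.smul_apply,
    LinearMap.coe_smulRight, map_sub, map_smul, smul_eq_mul, hBalt, mul_zero, zero_mul,
    smul_zero, map_zero, zero_smul, sub_zero, zero_sub, smul_smul]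
  module
end

section
/- Every extremal element of sp(V,B), where V is a finite-dimensional symplectic space over an algebraically closed field F of characteristic not 2, is of the form u(y) : v ↦ B(y,v)·y for some nonzero y ∈ V, up to a nonzero scalar multiple. -/
/-!
Write `u(y) = B(y, ·) • y` and `Q(y) = B(zy, y)`. Each `u(y)` lies in `sp(V,B)`, and evaluating
`[z,[z,u(y)]] = c • z` at `y` forces `c = 2 Q(y)`, so extremality becomes the vector identity
`2 Q(y) • z v = B(y,v) • z²y + 2 B(zy,v) • zy + B(z²y,v) • y`.
Since `Q` is the quadratic form of the symmetric form `B(z ·, ·)`, some `y` has `Q(y) ≠ 0`.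
Pairing the identity at `v = zy` with `zy`, then taking `v = z²y`, gives `z³y = 0`; comparing the
identities for `x` and `x + z²x` shows that `z³x = 0` forces `z²x = 0`. Once `z²y = 0`, the
identity reads `z = Q(y)⁻¹ u(zy)`.
-/

namespace LinearMap.BilinForm

variable {F V : Type*} [Field F] [AddCommGroup V] [Module F V] {B : LinearMap.BilinForm F V}
  {z : Module.End F V}

theorem smulRight_self_skew (hB : B.IsAlt) (y v w : V) :
    B ((B y).smulRight y v) w + B v ((B y).smulRight y w) = 0 := by
  simp only [LinearMap.smulRight_apply, map_smul, LinearMap.smul_apply, smul_eq_mul,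
    ← hB.neg_eq y v]
  ring

theorem lie_lie_smulRight_apply (hz : ∀ v w, B (z v) w + B v (z w) = 0) (y w : V) :
    ⁅z, ⁅z, (B y).smulRight y⁆⁆ w =
      B y w • z (z y) + (2 * B (z y) w) • z y + B (z (z y)) w • y := by
  have h₁ : B y (z w) = -B (z y) w := by linear_combination hz y w
  have h₂ : B y (z (z w)) = B (z (z y)) w := by
    linear_combination hz y (z w) - hz (z y) w
  simp only [Ring.lie_def, LinearMap.sub_apply, Module.End.mul_apply, LinearMap.smulRight_apply,
    map_smul, map_sub, h₁, h₂]
  module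

theorem lie_lie_smulRight_of_extremal (hB : B.IsAlt) (hzsp : ∀ v w, B (z v) w + B v (z w) = 0)
    (hz : ∀ A : Module.End F V, (∀ v w, B (A v) w + B v (A w) = 0) →
      ∃ c : F, ⁅z, ⁅z, A⁆⁆ = c • z) (y : V) :
    ⁅z, ⁅z, (B y).smulRight y⁆⁆ = (2 * B (z y) y) • z := by
  by_cases hzy : z y = 0
  · ext w
    simp [lie_lie_smulRight_apply hzsp, hzy]
  obtain ⟨c, hc⟩ := hz _ (smulRight_self_skew hB y)
  have h₀ : B (z (z y)) y = 0 := by linear_combination hzsp (z y) y - hB.self_eq_zero (z y)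
  have hcy := LinearMap.congr_fun hc y
  rw [lie_lie_smulRight_apply hzsp, hB.self_eq_zero, h₀] at hcy
  have hc' : c = 2 * B (z y) y := smul_left_injective F hzy (by simpa using hcy.symm)
  rw [hc, hc']

theorem smul_apply_eq_of_lie_lie_smulRight (hzsp : ∀ v w, B (z v) w + B v (z w) = 0)
    (hK : ∀ y, ⁅z, ⁅z, (B y).smulRight y⁆⁆ = (2 * B (z y) y) • z) (y v : V) :
    (2 * B (z y) y) • z v = B y v • z (z y) + (2 * B (z y) v) • z y + B (z (z y)) v • y := by
  rw [← lie_lie_smulRight_apply hzsp, hK]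
  rfl

theorem exists_apply_self_ne_zero (h2 : (2 : F) ≠ 0) (hB : B.IsAlt) (hB' : B.SeparatingLeft)
    (hzsp : ∀ v w, B (z v) w + B v (z w) = 0) (hz0 : z ≠ 0) : ∃ y, B (z y) y ≠ 0 := by
  by_contra! h
  refine hz0 (LinearMap.ext fun v => hB' _ fun w => ?_)
  have hvw := h (v + w)
  simp only [map_add, LinearMap.add_apply, h v, h w] at hvw
  have hsymm : B (z w) v = B (z v) w := by linear_combination hzsp w v + hB.neg_eq (z v) w
  have h2vw : 2 * B (z v) w = 0 := by linear_combination hvw - hsymm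
  exact (mul_eq_zero.mp h2vw).resolve_left h2

theorem apply_apply_apply_eq_zero (h2 : (2 : F) ≠ 0) (hB : B.IsAlt)
    (hzsp : ∀ v w, B (z v) w + B v (z w) = 0)
    (hK : ∀ y, ⁅z, ⁅z, (B y).smulRight y⁆⁆ = (2 * B (z y) y) • z) {y : V}
    (hy : B (z y) y ≠ 0) : z (z (z y)) = 0 := by
  have K := smul_apply_eq_of_lie_lie_smulRight hzsp hK y
  have hyzy : B y (z y) = -B (z y) y := (hB.neg_eq _ _).symm
  have hz2yy : B (z (z y)) y = 0 := by linear_combination hzsp (z y) y - hB.self_eq_zero (z y)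
  have hyz2y : B y (z (z y)) = 0 := by rw [← hB.neg_eq, hz2yy, neg_zero]
  have hzyz2y : B (z y) (z (z y)) = 0 := by
    have h := congrArg (fun u => B u (z y)) (K (z y))
    simp only [map_add, map_smul, LinearMap.add_apply, LinearMap.smul_apply, smul_eq_mul,
      hyzy, hB.self_eq_zero] at h
    have h4 : 2 * 2 * B (z y) y * B (z (z y)) (z y) = 0 := by linear_combination h
    rw [← hB.neg_eq, (mul_eq_zero.mp h4).resolve_left (mul_ne_zero (mul_ne_zero h2 h2) hy),
      neg_zero]
  have h := K (z (z y))
  rw [hyz2y, hzyz2y, hB.self_eq_zero] at h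
  simp only [zero_smul, mul_zero, add_zero] at h
  exact (smul_eq_zero.mp h).resolve_left (mul_ne_zero h2 hy)

theorem apply_apply_eq_zero_of_apply_apply_apply_eq_zero (h2 : (2 : F) ≠ 0)
    (hB : B.SeparatingLeft) (hzsp : ∀ v w, B (z v) w + B v (z w) = 0)
    (hK : ∀ y, ⁅z, ⁅z, (B y).smulRight y⁆⁆ = (2 * B (z y) y) • z) {x : V}
    (hx : z (z (z x)) = 0) : z (z x) = 0 := by
  set e := z (z x)
  have hxe : B (z x) e = 0 := by simpa [hx] using hzsp x e
  refine hB e fun v => ?_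
  have h := smul_apply_eq_of_lie_lie_smulRight hzsp hK (x + e) v
  simp only [map_add, LinearMap.add_apply, hx, hxe, add_zero] at h
  have hev : (2 * B e v) • e = 0 := by
    linear_combination (norm := module) smul_apply_eq_of_lie_lie_smulRight hzsp hK x v - h
  rcases smul_eq_zero.mp hev with h2ev | he
  · exact (mul_eq_zero.mp h2ev).resolve_left h2
  · rw [he, map_zero, LinearMap.zero_apply]

theorem eq_inv_smul_smulRight (h2 : (2 : F) ≠ 0) (hzsp : ∀ v w, B (z v) w + B v (z w) = 0)
    (hK : ∀ y, ⁅z, ⁅z, (B y).smulRight y⁆⁆ = (2 * B (z y) y) • z) {y : V}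
    (hy : B (z y) y ≠ 0) (hy2 : z (z y) = 0) :
    z = (B (z y) y)⁻¹ • (B (z y)).smulRight (z y) := by
  ext v
  apply smul_right_injective V (mul_ne_zero h2 hy)
  dsimp only
  rw [smul_apply_eq_of_lie_lie_smulRight hzsp hK, hy2]
  simp only [smul_zero, map_zero, LinearMap.zero_apply, zero_smul, add_zero, zero_add,
    LinearMap.smul_apply, LinearMap.smulRight_apply, smul_smul]
  congr 1
  field_simp

end LinearMap.BilinForm

open LinearMap.BilinForm in
theorem extremal_in_sp_is_transvection_general {F V : Type*} [Field F]
    [AddCommGroup V] [Module F V]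
    (h2 : (2 : F) ≠ 0)
    (B : LinearMap.BilinForm F V)
    (hBalt : ∀ v : V, B v v = 0) (hBnd : B.Nondegenerate)
    (z : Module.End F V) (hz0 : z ≠ 0)
    (hzsp : ∀ v w : V, B (z v) w + B v (z w) = 0)
    (hz : ∀ A : Module.End F V, (∀ v w : V, B (A v) w + B v (A w) = 0) →
      ∃ c : F, ⁅z, ⁅z, A⁆⁆ = c • z) :
    ∃ (y : V) (c : F), y ≠ 0 ∧ c ≠ 0 ∧ z = c • (B y).smulRight y := by
  have hK := lie_lie_smulRight_of_extremal hBalt hzsp hz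
  obtain ⟨y, hy⟩ := exists_apply_self_ne_zero h2 hBalt hBnd.1 hzsp hz0
  have hy2 : z (z y) = 0 := apply_apply_eq_zero_of_apply_apply_apply_eq_zero h2 hBnd.1 hzsp hK
    (apply_apply_apply_eq_zero h2 hBalt hzsp hK hy)
  refine ⟨z y, (B (z y) y)⁻¹, fun h => hy ?_, inv_ne_zero hy,
    eq_inv_smul_smulRight h2 hzsp hK hy hy2⟩
  rw [h, map_zero, LinearMap.zero_apply]

/-- every extremal element of `sp(V,B)` over an algebraically closed
field of characteristic not 2 is, up to a nonzero scalar, of the form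
`u(y) : v ↦ B(y,v)·y` for some nonzero `y`. -/
theorem extremal_in_sp_is_transvection {F V : Type*} [Field F] [IsAlgClosed F]
    [AddCommGroup V] [Module F V] [FiniteDimensional F V]
    (h2 : (2 : F) ≠ 0) (hdim : 2 ≤ Module.finrank F V)
    (B : LinearMap.BilinForm F V)
    (hBalt : ∀ v : V, B v v = 0) (hBnd : B.Nondegenerate)
    (z : Module.End F V) (hz0 : z ≠ 0)
    (hzsp : ∀ v w : V, B (z v) w + B v (z w) = 0)
    (hz : ∀ A : Module.End F V, (∀ v w : V, B (A v) w + B v (A w) = 0) →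
      ∃ c : F, ⁅z, ⁅z, A⁆⁆ = c • z) :
    ∃ (y : V) (c : F), y ≠ 0 ∧ c ≠ 0 ∧ z = c • (B y).smulRight y :=
  extremal_in_sp_is_transvection_general h2 B hBalt hBnd z hz0 hzsp hz
end

section
/- Let (V,B) be a finite-dimensional space over a field F (char F ≠ 2) with a nondegenerate symmetric bilinear form, and let u, v span an isotropic plane (B(u,u)=B(u,v)=B(v,v)=0, u,v linearly independent). Then the infinitesimal Siegel transvection T_{u,v} is an extremal element of o(V,B): for every A ∈ o(V,B), [T_{u,v},[T_{u,v},A]] is a scalar multiple of T_{u,v}. -/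
/-- the infinitesimal Siegel transvection `T_{u,v}` is an extremal
element of `o(V,B)`. -/
theorem siegel_transvection_extremal {F V : Type*} [Field F]
    [AddCommGroup V] [Module F V] [FiniteDimensional F V]
    (h2 : (2 : F) ≠ 0) (B : LinearMap.BilinForm F V)
    (hBsymm : ∀ a b : V, B a b = B b a) (hBnd : B.Nondegenerate)
    (u v : V) (hind : LinearIndependent F ![u, v])
    (huu : B u u = 0) (huv : B u v = 0) (hvv : B v v = 0)
    (A : Module.End F V) (hA : ∀ x y : V, B (A x) y + B x (A y) = 0) :
    ∃ c : F,
      ⁅(B u).smulRight v - (B v).smulRight u,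
        ⁅(B u).smulRight v - (B v).smulRight u, A⁆⁆ =
      c • ((B u).smulRight v - (B v).smulRight u) := by
  have hvu : B v u = 0 := by rw [hBsymm]; exact huv
  have hAu : B u (A u) = 0 := by
    have h := hA u u
    rw [hBsymm (A u) u] at h
    have h' : (2 : F) * B u (A u) = 0 := by linear_combination h
    exact (mul_eq_zero.mp h').resolve_left h2
  have hAv : B v (A v) = 0 := by
    have h := hA v v
    rw [hBsymm (A v) v] at h
    have h' : (2 : F) * B v (A v) = 0 := by linear_combination h
    exact (mul_eq_zero.mp h').resolve_left h2
  have hvAu : B v (A u) = - B u (A v) := by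
    have h := hA u v
    rw [hBsymm (A u) v] at h
    linear_combination h
  refine ⟨-2 * B u (A v), ?_⟩
  ext x
  simp only [Ring.lie_def, LinearMap.sub_apply, Module.End.mul_apply,
    LinearMap.smulRight_apply, LinearMap.smul_apply, map_sub, map_smul,
    smul_sub, smul_smul, LinearMap.map_smul₂, LinearMap.sub_apply]
  simp only [huu, huv, hvv, hvu, hAu, hAv, hvAu, smul_eq_mul, zero_smul,
    sub_zero, zero_sub, smul_neg, neg_smul, mul_zero, zero_mul]
  module
end

section
/- Let L be a Lie algebra over a field F of characteristic not 2, let x, y, z ∈ L with y extremal with extremal functional f_y, and suppose f(x,y) ≠ 0 ≠ f(y,z) where f is the extremal form. Set s = f(x,[y,z])/(f(x,y)·f(y,z)) and x̂ = exp(s·ad y)(x) = x + s[y,x] + (s²/2)·f(y,x)·y. Then f(x̂, [y,z]) = 0 and f(x̂, y) = f(x,y). -/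
/-!
Invariance of `f` gives `f(y, [y,z]) = 0` and `f([y,x], y) = 0`, while extremality of `y` gives
`f(y,y) = 0` and `f([y,x], [y,z]) = -f(x,[y,[y,z]]) = -f(x,y) f(y,z)`. Hence, for every `c`,
`f(x + s[y,x] + c y, [y,z]) = f(x,[y,z]) - s f(x,y) f(y,z)` and `f(x + s[y,x] + c y, y) = f(x,y)`,
and the chosen `s` makes the first value vanish.
-/

section InvariantForm

variable {R L : Type*} [CommRing R] [LieRing L] [LieAlgebra R L] (f : L →ₗ[R] L →ₗ[R] R)

theorem form_lie_self_right_eq_zero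
    (hassoc : ∀ a b c : L, f ⁅a, b⁆ c = f a ⁅b, c⁆) (a b : L) :
    f a ⁅a, b⁆ = 0 := by
  rw [← hassoc, lie_self, map_zero, LinearMap.zero_apply]

theorem form_lie_left_self_eq_zero
    (hassoc : ∀ a b c : L, f ⁅a, b⁆ c = f a ⁅b, c⁆) (a b : L) :
    f ⁅a, b⁆ a = 0 := by
  rw [hassoc, ← lie_skew, map_neg, form_lie_self_right_eq_zero f hassoc, neg_zero]

theorem form_self_eq_zero_of_extremal [NoZeroSMulDivisors R L] {y : L}
    (hy : ∀ a : L, ⁅y, ⁅y, a⁆⁆ = f y a • y) : f y y = 0 := by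
  have h := hy y
  rw [lie_self, lie_zero, eq_comm] at h
  rcases eq_zero_or_eq_zero_of_smul_eq_zero h with h | rfl
  · exact h
  · simp

theorem form_lie_lie_of_extremal (hassoc : ∀ a b c : L, f ⁅a, b⁆ c = f a ⁅b, c⁆) {y : L}
    (hy : ∀ a : L, ⁅y, ⁅y, a⁆⁆ = f y a • y) (x z : L) :
    f ⁅y, x⁆ ⁅y, z⁆ = -(f x y * f y z) := by
  rw [← lie_skew, map_neg, LinearMap.neg_apply, hassoc, hy, map_smul, smul_eq_mul, mul_comm]

theorem form_add_smul_lie_add_smul_lie_of_extremal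
    (hassoc : ∀ a b c : L, f ⁅a, b⁆ c = f a ⁅b, c⁆) {y : L}
    (hy : ∀ a : L, ⁅y, ⁅y, a⁆⁆ = f y a • y) (x z : L) (s c : R) :
    f (x + s • ⁅y, x⁆ + c • y) ⁅y, z⁆ = f x ⁅y, z⁆ - s * (f x y * f y z) := by
  simp only [map_add, map_smul, LinearMap.add_apply, LinearMap.smul_apply, smul_eq_mul,
    form_lie_lie_of_extremal f hassoc hy, form_lie_self_right_eq_zero f hassoc]
  ring

theorem form_add_smul_lie_add_smul_self_of_extremal [NoZeroSMulDivisors R L]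
    (hassoc : ∀ a b c : L, f ⁅a, b⁆ c = f a ⁅b, c⁆) {y : L}
    (hy : ∀ a : L, ⁅y, ⁅y, a⁆⁆ = f y a • y) (x : L) (s c : R) :
    f (x + s • ⁅y, x⁆ + c • y) y = f x y := by
  simp only [map_add, map_smul, LinearMap.add_apply, LinearMap.smul_apply, smul_eq_mul,
    form_lie_left_self_eq_zero f hassoc, form_self_eq_zero_of_extremal f hy]
  ring

end InvariantForm

theorem exp_ad_kills_form_value_general {F L : Type*} [Field F] [LieRing L] [LieAlgebra F L]
    (f : L →ₗ[F] L →ₗ[F] F)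
    (hassoc : ∀ a b c : L, f ⁅a, b⁆ c = f a ⁅b, c⁆)
    (x y z : L)
    (hy : ∀ a : L, ⁅y, ⁅y, a⁆⁆ = f y a • y)
    (hfxy : f x y ≠ 0) (hfyz : f y z ≠ 0)
    (s : F) (hs : s = f x ⁅y, z⁆ / (f x y * f y z))
    (xhat : L) (hxhat : xhat = x + s • ⁅y, x⁆ + (s ^ 2 / 2 * f y x) • y) :
    f xhat ⁅y, z⁆ = 0 ∧ f xhat y = f x y := by
  subst hxhat
  refine ⟨?_, form_add_smul_lie_add_smul_self_of_extremal f hassoc hy x s _⟩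
  rw [form_add_smul_lie_add_smul_lie_of_extremal f hassoc hy, hs,
    div_mul_cancel₀ _ (mul_ne_zero hfxy hfyz), sub_self]

/-- for extremal `x, y, z` with `f(x,y) ≠ 0 ≠ f(y,z)`, setting
`s = f(x,[y,z])/(f(x,y)·f(y,z))` and `x̂ = exp(s·ad y)(x) = x + s[y,x] + (s²/2)f(y,x)·y`,
one has `f(x̂,[y,z]) = 0` and `f(x̂,y) = f(x,y)`. -/
theorem exp_ad_kills_form_value {F L : Type*} [Field F] [LieRing L] [LieAlgebra F L]
    (h2 : (2 : F) ≠ 0) (f : L →ₗ[F] L →ₗ[F] F)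
    (hsymm : ∀ a b : L, f a b = f b a)
    (hassoc : ∀ a b c : L, f ⁅a, b⁆ c = f a ⁅b, c⁆)
    (hgen : LieSubalgebra.lieSpan F L
      {w : L | w ≠ 0 ∧ ∀ a : L, ⁅w, ⁅w, a⁆⁆ = f w a • w} = ⊤)
    (x y z : L)
    (hx0 : x ≠ 0) (hx : ∀ a : L, ⁅x, ⁅x, a⁆⁆ = f x a • x)
    (hy0 : y ≠ 0) (hy : ∀ a : L, ⁅y, ⁅y, a⁆⁆ = f y a • y)
    (hz0 : z ≠ 0) (hz : ∀ a : L, ⁅z, ⁅z, a⁆⁆ = f z a • z)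
    (hfxy : f x y ≠ 0) (hfyz : f y z ≠ 0)
    (s : F) (hs : s = f x ⁅y, z⁆ / (f x y * f y z))
    (xhat : L) (hxhat : xhat = x + s • ⁅y, x⁆ + (s ^ 2 / 2 * f y x) • y) :
    f xhat ⁅y, z⁆ = 0 ∧ f xhat y = f x y :=
  exp_ad_kills_form_value_general f hassoc x y z hy hfxy hfyz s hs xhat hxhat
end
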